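/- Let σ = -1 and let q_1,…,q_n be a negative hyperbolic rotopulsator of the curved n-body problem such that the functions ρ_1,…,ρ_n are all equal to one common function ρ. Then all the constants β_1,…,β_n are equal, i.e., there is a constant β such that q_{i3}(t) = ρ(t)·sinh(φ(t)+β) and q_{i4}(t) = ρ(t)·cosh(φ(t)+β) for every i ∈ {1,…,n} and every t. -/

import Mathlib

/-!
Write `W_i` for the Wronskian of `q_{i4}` and `q_{i3}`. The bodies of the rotopulsator are images
of one another under hyperbolic rotations of the `(x₃, x₄)`-plane, which have determinant one,
so all `W_i` coincide. In `W_i'` the terms of the equations of motion proportional to `q_i`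
cancel, leaving `W_i' = Σ_{j ≠ i} m_j ρ² sinh(β_j - β_i) / D_{ij}` with `D_{ij} > 0`. At an index
with maximal `β` every term is `≤ 0`, at one with minimal `β` every term is `≥ 0`; as the two
sums are equal, all terms of the first vanish and every `β_j` is the maximum.
-/

open Real Finset

/-- The "curved inner product" `x ⊙ y = x₁y₁ + x₂y₂ + x₃y₃ + σx₄y₄` on `ℝ⁴`. -/
noncomputable def odot (σ : ℝ) (x y : Fin 4 → ℝ) : ℝ :=
  x 0 * y 0 + x 1 * y 1 + x 2 * y 2 + σ * x 3 * y 3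

noncomputable def wronskian (x y : ℝ → ℝ) (t : ℝ) : ℝ :=
  x t * deriv y t - deriv x t * y t

theorem wronskian_linear_comb {x y : ℝ → ℝ} (hx : Differentiable ℝ x) (hy : Differentiable ℝ y)
    (a b c d t : ℝ) :
    wronskian (fun t => a * x t + b * y t) (fun t => c * x t + d * y t) t =
      (a * d - b * c) * wronskian x y t := by
  have hderiv : ∀ a b : ℝ, deriv (fun t => a * x t + b * y t) t = a * deriv x t + b * deriv y t :=
    fun a b => (((hx t).hasDerivAt.const_mul a).add ((hy t).hasDerivAt.const_mul b)).deriv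
  simp only [wronskian, hderiv]
  ring

theorem hasDerivAt_wronskian {x y : ℝ → ℝ} {t : ℝ} (hx : DifferentiableAt ℝ x t)
    (hy : DifferentiableAt ℝ y t) (hx' : DifferentiableAt ℝ (deriv x) t)
    (hy' : DifferentiableAt ℝ (deriv y) t) :
    HasDerivAt (wronskian x y) (x t * deriv (deriv y) t - deriv (deriv x) t * y t) t :=
  ((hx.hasDerivAt.mul hy'.hasDerivAt).sub (hx'.hasDerivAt.mul hy.hasDerivAt)).congr_deriv (by ring)

theorem mul_sub_mul_eq_sum_of_eq_sum_sub {ι : Type*} (s : Finset ι) {f g c u v : ι → ℝ}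
    {a b x y μ : ℝ}
    (ha : a = ∑ j ∈ s, f j * (u j - c j * x) / g j - μ * x)
    (hb : b = ∑ j ∈ s, f j * (v j - c j * y) / g j - μ * y) :
    x * b - a * y = ∑ j ∈ s, f j * (x * v j - u j * y) / g j := by
  have hsum : ∑ j ∈ s, f j * (x * v j - u j * y) / g j =
      x * ∑ j ∈ s, f j * (v j - c j * y) / g j - (∑ j ∈ s, f j * (u j - c j * x) / g j) * y := by
    rw [mul_sum, sum_mul, ← sum_sub_distrib]
    exact sum_congr rfl fun j _ => by ring
  rw [hsum, ha, hb]
  ring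

theorem cosh_eq_boost (r u v : ℝ) :
    r * cosh v = cosh (v - u) * (r * cosh u) + sinh (v - u) * (r * sinh u) := by
  conv_lhs => rw [← add_sub_cancel u v, cosh_add]
  ring

theorem sinh_eq_boost (r u v : ℝ) :
    r * sinh v = sinh (v - u) * (r * cosh u) + cosh (v - u) * (r * sinh u) := by
  conv_lhs => rw [← add_sub_cancel u v, sinh_add]
  ring

theorem wronskian_eq_of_hyperbolic_polar {ρ φ x y x' y' : ℝ → ℝ} {b b' : ℝ}
    (hx : Differentiable ℝ x) (hy : Differentiable ℝ y)
    (hxρ : ∀ t, x t = ρ t * cosh (φ t + b)) (hyρ : ∀ t, y t = ρ t * sinh (φ t + b))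
    (hx'ρ : ∀ t, x' t = ρ t * cosh (φ t + b')) (hy'ρ : ∀ t, y' t = ρ t * sinh (φ t + b')) :
    wronskian x' y' = wronskian x y := by
  have hb : ∀ t, b' - b = φ t + b' - (φ t + b) := fun t => (add_sub_add_left_eq_sub _ _ _).symm
  have hx' : x' = fun t => cosh (b' - b) * x t + sinh (b' - b) * y t := by
    funext t
    rw [hx'ρ, hxρ, hyρ, hb t]
    exact cosh_eq_boost _ _ _
  have hy' : y' = fun t => sinh (b' - b) * x t + cosh (b' - b) * y t := by
    funext t
    rw [hy'ρ, hxρ, hyρ, hb t]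
    exact sinh_eq_boost _ _ _
  funext t
  rw [hx', hy', wronskian_linear_comb hx hy, ← sq, ← sq, cosh_sq_sub_sinh_sq, one_mul]

theorem mul_cosh_mul_sinh_sub (r u v : ℝ) :
    r * cosh u * (r * sinh v) - r * cosh v * (r * sinh u) = r ^ 2 * sinh (v - u) := by
  rw [sinh_sub]
  ring

theorem eq_of_sum_erase_map_sub_eq {ι : Type*} [Fintype ι] [DecidableEq ι] {g : ℝ → ℝ}
    (hg : StrictMono g) (hg0 : g 0 = 0) (β : ι → ℝ) (w : ι → ι → ℝ)
    (hw : ∀ i j, i ≠ j → 0 < w i j)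
    (hS : ∀ i i', ∑ j ∈ univ.erase i, w i j * g (β j - β i) =
      ∑ j ∈ univ.erase i', w i' j * g (β j - β i'))
    (i j : ι) : β i = β j := by
  have : Nonempty ι := ⟨i⟩
  obtain ⟨i₀, -, hmax⟩ := exists_max_image univ β univ_nonempty
  obtain ⟨i₁, -, hmin⟩ := exists_min_image univ β univ_nonempty
  have hterm_nonpos : ∀ k ∈ univ.erase i₀, w i₀ k * g (β k - β i₀) ≤ 0 := fun k hk =>
    mul_nonpos_of_nonneg_of_nonpos (hw _ _ (ne_of_mem_erase hk).symm).le
      (hg0 ▸ hg.monotone (by linarith [hmax k (mem_univ k)]))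
  have hsum_nonneg : 0 ≤ ∑ k ∈ univ.erase i₁, w i₁ k * g (β k - β i₁) := sum_nonneg fun k hk =>
    mul_nonneg (hw _ _ (ne_of_mem_erase hk).symm).le
      (hg0 ▸ hg.monotone (by linarith [hmin k (mem_univ k)]))
  have hzero : ∑ k ∈ univ.erase i₀, w i₀ k * g (β k - β i₀) = 0 :=
    le_antisymm (sum_nonpos hterm_nonpos) (hS i₀ i₁ ▸ hsum_nonneg)
  have hβ₀ : ∀ k, β k = β i₀ := by
    intro k
    by_cases hk : k = i₀
    · rw [hk]
    have hterm := (sum_eq_zero_iff_of_nonpos hterm_nonpos).1 hzero k (mem_erase.2 ⟨hk, mem_univ k⟩)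
    rwa [mul_eq_zero, or_iff_right (hw _ _ (Ne.symm hk)).ne', ← hg0, hg.injective.eq_iff,
      sub_eq_zero] at hterm
  rw [hβ₀ i, hβ₀ j]

theorem negative_hyperbolic_rotopulsator_common_rho_all_beta_equal
    (σ : ℝ) (n : ℕ)
    (q : Fin n → ℝ → Fin 4 → ℝ) (m : Fin n → ℝ)
    (hm : ∀ i, 0 < m i)
    -- the curves are twice differentiable
    (hq1 : ∀ i k, Differentiable ℝ fun t => q i t k)
    (hq2 : ∀ i k, Differentiable ℝ (deriv fun t => q i t k))
    -- singularity avoidance: `σ - σ(q_i ⊙ q_j)² > 0` for `i ≠ j`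
    (hsep : ∀ i j, i ≠ j → ∀ t, 0 < σ - σ * (odot σ (q i t) (q j t)) ^ 2)
    -- the equations of motion of the curved n-body problem
    (heom : ∀ i t k,
      deriv (deriv fun s => q i s k) t =
        (∑ j ∈ Finset.univ.erase i,
          m j * (q j t k - σ * odot σ (q i t) (q j t) * q i t k) /
            (σ - σ * (odot σ (q i t) (q j t)) ^ 2) ^ ((3 : ℝ) / 2))
        - σ * odot σ (fun l => deriv (fun s => q i s l) t)
            (fun l => deriv (fun s => q i s l) t) * q i t k)
    -- negative hyperbolic rotopulsator structure with common `ρ`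
    (ρ φ : ℝ → ℝ) (hρpos : ∀ t, 0 < ρ t)
    (β : Fin n → ℝ)
    (hrep : ∀ i t, q i t 2 = ρ t * Real.sinh (φ t + β i) ∧
                   q i t 3 = ρ t * Real.cosh (φ t + β i)) :
    ∃ b : ℝ, ∀ i t, q i t 2 = ρ t * Real.sinh (φ t + b) ∧
                    q i t 3 = ρ t * Real.cosh (φ t + b) := by
  have hW : ∀ i j, wronskian (fun t => q j t 3) (fun t => q j t 2) =
      wronskian (fun t => q i t 3) (fun t => q i t 2) := fun i j =>
    wronskian_eq_of_hyperbolic_polar (hq1 i 3) (hq1 i 2) (fun t => (hrep i t).2)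
      (fun t => (hrep i t).1) (fun t => (hrep j t).2) (fun t => (hrep j t).1)
  have hW' : ∀ i t, HasDerivAt (wronskian (fun t => q i t 3) (fun t => q i t 2))
      (∑ j ∈ univ.erase i, m j * ρ t ^ 2 / (σ - σ * (odot σ (q i t) (q j t)) ^ 2) ^ ((3 : ℝ) / 2) *
        sinh (β j - β i)) t := by
    intro i t
    convert hasDerivAt_wronskian (hq1 i 3 t) (hq1 i 2 t) (hq2 i 3 t) (hq2 i 2 t) using 1
    rw [mul_sub_mul_eq_sum_of_eq_sum_sub _ (heom i t 3) (heom i t 2)]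
    refine sum_congr rfl fun j _ => ?_
    rw [(hrep i t).1, (hrep i t).2, (hrep j t).1, (hrep j t).2, mul_cosh_mul_sinh_sub,
      add_sub_add_left_eq_sub]
    ring
  have hβ : ∀ i j, β i = β j := eq_of_sum_erase_map_sub_eq sinh_strictMono sinh_zero β _
    (fun i j hij => div_pos (mul_pos (hm j) (pow_pos (hρpos 0) 2))
      (rpow_pos_of_pos (hsep i j hij 0) _))
    (fun i i' => (hW' i 0).unique (hW i i' ▸ hW' i' 0))
  rcases isEmpty_or_nonempty (Fin n) with _ | ⟨⟨i₀⟩⟩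
  · exact ⟨0, fun i => isEmptyElim i⟩
  · exact ⟨β i₀, fun i t => hβ i i₀ ▸ hrep i t⟩
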